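/- The l1 matrix norm ‖A‖_{l1} = ∑_{i,j} |A_{ij}| is not contracting under CPTP maps: there exist 4×4 density matrices ρ and σ, and a quantum operation Φ on 4×4 complex matrices, such that ‖Φ(ρ) − Φ(σ)‖_{l1} > ‖ρ − σ‖_{l1}. -/

import Mathlib

open Matrix BigOperators ComplexOrder

/-- The l1-coherence of a matrix: the sum of the absolute values of its
off-diagonal entries. -/
noncomputable def Cl1 {n : ℕ} (A : Matrix (Fin n) (Fin n) ℂ) : ℝ :=
  ∑ i, ∑ j, if i ≠ j then ‖A i j‖ else 0

/-- A density matrix: positive semidefinite with trace 1. -/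
def IsDensity {n : ℕ} (ρ : Matrix (Fin n) (Fin n) ℂ) : Prop :=
  ρ.PosSemidef ∧ ρ.trace = 1

/-- A quantum operation (CPTP map) given by a finite family of Kraus operators. -/
def IsQuantumOp {n : ℕ} (Φ : Matrix (Fin n) (Fin n) ℂ → Matrix (Fin n) (Fin n) ℂ) : Prop :=
  ∃ (m : ℕ) (K : Fin m → Matrix (Fin n) (Fin n) ℂ),
    (∑ i, (K i)ᴴ * K i) = 1 ∧ ∀ ρ, Φ ρ = ∑ i, K i * ρ * (K i)ᴴ

/-- The dephasing map `Δ`, keeping only the diagonal part of a matrix. -/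
def Deph {n : ℕ} (A : Matrix (Fin n) (Fin n) ℂ) : Matrix (Fin n) (Fin n) ℂ :=
  Matrix.of fun i j => if i = j then A i j else 0

/-- The entrywise l1 norm of a matrix. -/
noncomputable def l1Norm {n : ℕ} (A : Matrix (Fin n) (Fin n) ℂ) : ℝ :=
  ∑ i, ∑ j, ‖A i j‖

/-! A rotation `U` by an angle `θ` in the plane of the first two basis vectors maps
`ρ - σ = diag(1, -1, 0, 0)`, of l1 norm `2`, to a matrix with diagonal `± cos 2θ` and off-diagonal
entries `sin 2θ`, of l1 norm `2 (|cos 2θ| + |sin 2θ|)`. The rational point `cos θ = 3/5`,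
`sin θ = 4/5` gives `62/25 > 2`, and conjugation by `U` is a quantum operation with the single
Kraus operator `U`. -/

lemma isDensity_single {n : ℕ} (i : Fin n) : IsDensity (single i i (1 : ℂ)) := by
  refine ⟨?_, trace_single_eq_same i 1⟩
  rw [← diagonal_single]
  exact posSemidef_diagonal_iff.mpr fun j => by
    rcases eq_or_ne j i with rfl | h <;> simp [*]

lemma isQuantumOp_unitary_conj {n : ℕ} (U : Matrix (Fin n) (Fin n) ℂ) (hU : Uᴴ * U = 1) :
    IsQuantumOp fun A => U * A * Uᴴ :=
  ⟨1, fun _ => U, by simpa using hU, fun A => by simp⟩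

lemma l1Norm_map_ofReal {n : ℕ} (M : Matrix (Fin n) (Fin n) ℝ) :
    l1Norm (M.map ((↑) : ℝ → ℂ)) = ∑ i, ∑ j, |M i j| := by
  simp [l1Norm]

def planeRotation (c s : ℝ) : Matrix (Fin 4) (Fin 4) ℂ :=
  !![c, -s, 0, 0; s, c, 0, 0; 0, 0, 1, 0; 0, 0, 0, 1]

lemma planeRotation_conjTranspose_mul_self {c s : ℝ} (h : c ^ 2 + s ^ 2 = 1) :
    (planeRotation c s)ᴴ * planeRotation c s = 1 := by
  ext i j
  fin_cases i <;> fin_cases j <;>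
    simp [planeRotation, mul_apply, Fin.sum_univ_four, one_apply, Complex.ext_iff] <;>
    nlinarith [h]

lemma planeRotation_conj_diagonal (c s : ℝ) :
    planeRotation c s * diagonal ![1, -1, 0, 0] * (planeRotation c s)ᴴ =
      (!![c ^ 2 - s ^ 2, 2 * c * s, 0, 0; 2 * c * s, s ^ 2 - c ^ 2, 0, 0; 0, 0, 0, 0; 0, 0, 0, 0] :
        Matrix (Fin 4) (Fin 4) ℝ).map (↑) := by
  ext i j
  simp only [mul_apply, Fin.sum_univ_four, conjTranspose_apply, diagonal_apply, map_apply]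
  fin_cases i <;> fin_cases j <;> simp [planeRotation] <;> ring

lemma l1Norm_planeRotation_conj_diagonal (c s : ℝ) :
    l1Norm (planeRotation c s * diagonal ![1, -1, 0, 0] * (planeRotation c s)ᴴ) =
      2 * |c ^ 2 - s ^ 2| + 4 * |c * s| := by
  rw [planeRotation_conj_diagonal, l1Norm_map_ofReal]
  simp [Fin.sum_univ_four, abs_sub_comm (s ^ 2), abs_mul]
  ring

lemma l1Norm_diagonal_one_neg_one : l1Norm (diagonal ![(1 : ℂ), -1, 0, 0]) = 2 := by
  simp [l1Norm, Fin.sum_univ_four]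
  norm_num

lemma single_sub_single_eq_diagonal :
    single 0 0 (1 : ℂ) - single 1 1 1 = (diagonal ![1, -1, 0, 0] : Matrix (Fin 4) (Fin 4) ℂ) := by
  ext i j
  fin_cases i <;> fin_cases j <;> simp

theorem l1_norm_not_contracting_under_CPTP :
    ∃ (ρ σ : Matrix (Fin 4) (Fin 4) ℂ)
      (Φ : Matrix (Fin 4) (Fin 4) ℂ → Matrix (Fin 4) (Fin 4) ℂ),
      IsDensity ρ ∧ IsDensity σ ∧ IsQuantumOp Φ ∧
      l1Norm (ρ - σ) < l1Norm (Φ ρ - Φ σ) := by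
  set U := planeRotation (3 / 5) (4 / 5)
  have hΦ : U * single 0 0 1 * Uᴴ - U * single 1 1 1 * Uᴴ = U * diagonal ![1, -1, 0, 0] * Uᴴ := by
    rw [← single_sub_single_eq_diagonal, mul_sub, sub_mul]
  refine ⟨single 0 0 1, single 1 1 1, fun A => U * A * Uᴴ, isDensity_single 0, isDensity_single 1,
    isQuantumOp_unitary_conj U (planeRotation_conjTranspose_mul_self (by norm_num)), ?_⟩
  rw [hΦ, single_sub_single_eq_diagonal, l1Norm_planeRotation_conj_diagonal,
    l1Norm_diagonal_one_neg_one]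
  norm_num [abs_of_pos]
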